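/- arXiv:1506.03488 — 2 statements merged into one kernel-verified Lean document; each statement's English description precedes it below -/
import Mathlib

section
/- Marczewski pair property: Let H ⊆ ℕ^[∞] be a semiselective coideal. Then for every X ⊆ ℕ^[∞] there exists an H-Ramsey set Φ with X ⊆ Φ such that every H-Ramsey subset of Φ ∖ X is H-Ramsey null. -/
open Set

/-- `ellR n A` : the set of the `n` least elements of `A ⊆ ℕ` (the approximation `rₙ(A)`). -/
noncomputable def ellR (n : ℕ) (A : Set ℕ) : Finset ℕ :=
  (Finset.range n).image (Nat.nth (· ∈ A))

/-- `a ⊏ B` : the finite set `a` is an initial segment of `B`. -/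
def IsInitSeg (a : Finset ℕ) (B : Set ℕ) : Prop :=
  ↑a ⊆ B ∧ ∀ x ∈ B, x ∉ a → ∀ y ∈ a, y < x

/-- The Ellentuck neighborhood `[a, A] = {B ∈ ℕ^[∞] : a ⊏ B ∧ B ⊆ A}`. -/
def ENbhd (a : Finset ℕ) (A : Set ℕ) : Set (Set ℕ) :=
  {B | B.Infinite ∧ IsInitSeg a B ∧ B ⊆ A}

/-- `[n, A] := [rₙ(A), A]`. -/
noncomputable def ENbhdN (n : ℕ) (A : Set ℕ) : Set (Set ℕ) :=
  ENbhd (ellR n A) A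

/-- `depth_A(a)` : the least `n` with `a ⊆ rₙ(A)`. -/
noncomputable def depth (A : Set ℕ) (a : Finset ℕ) : ℕ :=
  sInf {n | a ⊆ ellR n A}

/-- The one-step extensions of `a` inside `B`: the sets `a ∪ {x}` with `x ∈ B` greater
than every element of `a` (i.e. `r_{|a|+1}[a,B]`). -/
def oneStepExt (a : Finset ℕ) (B : Set ℕ) : Set (Finset ℕ) :=
  {b | ∃ x ∈ B, (∀ y ∈ a, y < x) ∧ b = insert x a}

/-- `H ⊆ ℕ^[∞]` is a coideal: upward closed, satisfies A3 mod H and A4 mod H. -/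
def IsCoideal (H : Set (Set ℕ)) : Prop :=
  (∀ A ∈ H, A.Infinite) ∧
  (∀ A ∈ H, ∀ B : Set ℕ, B.Infinite → A ⊆ B → B ∈ H) ∧
  (∀ A ∈ H, ∀ a : Finset ℕ, ↑a ⊆ A →
    (∀ B ∈ H ∩ ENbhdN (depth A a) A, (ENbhd a B).Nonempty) ∧
    (∀ B ∈ H, B ⊆ A → (ENbhd a B).Nonempty →
      ∃ A' ∈ H ∩ ENbhdN (depth A a) A,
        (ENbhd a A').Nonempty ∧ ENbhd a A' ⊆ ENbhd a B)) ∧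
  (∀ A ∈ H, ∀ a : Finset ℕ, ↑a ⊆ A → ∀ O : Set (Finset ℕ),
    ∃ B ∈ H ∩ ENbhdN (depth A a) A,
      oneStepExt a B ⊆ O ∨ oneStepExt a B ∩ O = ∅)

/-- `D` is dense open in `S` (with respect to `⊆`). -/
def DenseOpenIn (D S : Set (Set ℕ)) : Prop :=
  (∀ A ∈ S, ∃ B ∈ D, B ⊆ A) ∧ (∀ A ∈ S, ∀ B ∈ D, A ⊆ B → A ∈ D)

/-- `C` diagonalizes the family `{A_a}`: for every finite `a ⊆ C`, `[a,C] ⊆ [a,A_a]`. -/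
def Diagonalizes (C : Set ℕ) (Afam : Finset ℕ → Set ℕ) : Prop :=
  ∀ a : Finset ℕ, ↑a ⊆ C → ENbhd a C ⊆ ENbhd a (Afam a)

/-- `H` is a semiselective coideal. -/
def Semiselective (H : Set (Set ℕ)) : Prop :=
  IsCoideal H ∧
  ∀ A ∈ H, ∀ Dfam : Finset ℕ → Set (Set ℕ),
    (∀ a : Finset ℕ, ↑a ⊆ A → DenseOpenIn (Dfam a) (H ∩ ENbhdN (depth A a) A)) →
    ∀ B ∈ H, B ⊆ A →
      ∃ C ∈ H, C ⊆ B ∧ ∃ Afam : Finset ℕ → Set ℕ,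
        (∀ a : Finset ℕ, ↑a ⊆ A → Afam a ∈ Dfam a) ∧ Diagonalizes C Afam

/-- `X` is `H`-Ramsey. -/
def HRamsey (H X : Set (Set ℕ)) : Prop :=
  ∀ a : Finset ℕ, ∀ A ∈ H, (ENbhd a A).Nonempty →
    ∃ B ∈ ENbhd a A ∩ H, ENbhd a B ⊆ X ∨ ENbhd a B ∩ X = ∅

/-- `X` is `H`-Ramsey null. -/
def HRamseyNull (H X : Set (Set ℕ)) : Prop :=
  ∀ a : Finset ℕ, ∀ A ∈ H, (ENbhd a A).Nonempty →
    ∃ B ∈ ENbhd a A ∩ H, ENbhd a B ∩ X = ∅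

/-- `X` is `H`-Baire. -/
def HBaire (H X : Set (Set ℕ)) : Prop :=
  ∀ a : Finset ℕ, ∀ A ∈ H, (ENbhd a A).Nonempty →
    ∃ (b : Finset ℕ) (B : Set ℕ), B ∈ H ∧ (ENbhd b B).Nonempty ∧
      ENbhd b B ⊆ ENbhd a A ∧ (ENbhd b B ⊆ X ∨ ENbhd b B ∩ X = ∅)

/-- `X` is `H`-meager. -/
def HMeager (H X : Set (Set ℕ)) : Prop :=
  ∀ a : Finset ℕ, ∀ A ∈ H, (ENbhd a A).Nonempty →
    ∃ (b : Finset ℕ) (B : Set ℕ), B ∈ H ∧ (ENbhd b B).Nonempty ∧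
      ENbhd b B ⊆ ENbhd a A ∧ ENbhd b B ∩ X = ∅

/-- `Exp(H) = {[n,A] : n ∈ ℕ, A ∈ H}`. -/
def ExpH (H : Set (Set ℕ)) : Set (Set (Set ℕ)) :=
  {S | ∃ (n : ℕ) (A : Set ℕ), A ∈ H ∧ S = ENbhdN n A}

/-- `X` is `Exp(H)`-nowhere dense. -/
def ExpNwd (H X : Set (Set ℕ)) : Prop :=
  ∀ S ∈ ExpH H, ∃ T ∈ ExpH H, T ⊆ S ∧ T ∩ X = ∅

/-- Combinatorial forcing: `A` accepts `a` (relative to `H` and `F`). -/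
def Accepts (H : Set (Set ℕ)) (F : Set (Finset ℕ)) (A : Set ℕ) (a : Finset ℕ) : Prop :=
  ∀ B ∈ H ∩ ENbhdN (depth A a) A, ∃ n : ℕ, ellR n B ∈ F

/-- Combinatorial forcing: `A` rejects `a` (relative to `H` and `F`). -/
def Rejects (H : Set (Set ℕ)) (F : Set (Finset ℕ)) (A : Set ℕ) (a : Finset ℕ) : Prop :=
  ∀ B ∈ H ∩ ENbhdN (depth A a) A, ¬ Accepts H F B a

/-- `A ≤* B` : `A` is an almost-reduction of `B`. -/
def AlmostRed (A B : Set ℕ) : Prop :=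
  ∃ a : Finset ℕ, ↑a ⊆ A ∧ ENbhd a A ⊆ ENbhd a B

/-- `D ⊆ H` is dense open in the preorder `(H, ≤*)`. -/
def DenseOpenStar (H D : Set (Set ℕ)) : Prop :=
  D ⊆ H ∧ (∀ A ∈ H, ∃ B ∈ D, AlmostRed B A) ∧
  (∀ A ∈ H, ∀ B ∈ D, AlmostRed A B → A ∈ D)

/-- The family `{A_a}` is filtered by `⊆` (indexed by the finite subsets of `A`). -/
def FilteredFamily (A : Set ℕ) (Afam : Finset ℕ → Set ℕ) : Prop :=
  ∀ a b : Finset ℕ, ↑a ⊆ A → ↑b ⊆ A →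
    ∃ c : Finset ℕ, ↑c ⊆ A ∧ Afam c ⊆ Afam a ∧ Afam c ⊆ Afam b

/-- `H` is a selective coideal. -/
def SelectiveCoideal (H : Set (Set ℕ)) : Prop :=
  IsCoideal H ∧
  ∀ A ∈ H, ∀ Afam : Finset ℕ → Set ℕ,
    (∀ a : Finset ℕ, ↑a ⊆ A → Afam a ∈ H ∧ Afam a ⊆ A ∧ (ENbhd a (Afam a)).Nonempty) →
    FilteredFamily A Afam →
    ∃ B ∈ H, B ⊆ A ∧ Diagonalizes B Afam

/-- `U ⊆ ℕ^[∞]` is a filter on `(ℕ^[∞], ⊆)`. -/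
def IsEFilter (U : Set (Set ℕ)) : Prop :=
  (∀ A ∈ U, A.Infinite) ∧
  (∀ A ∈ U, ∀ B : Set ℕ, B.Infinite → A ⊆ B → B ∈ U) ∧
  (∀ A ∈ U, ∀ B ∈ U, ∀ a : Finset ℕ,
    (ENbhd a A).Nonempty → (ENbhd a B).Nonempty →
      ∃ C ∈ U, C ∈ ENbhd a A ∩ ENbhd a B)

/-- `U` is an ultrafilter: a maximal filter satisfying A3 mod U. -/
def IsEUltrafilter (U : Set (Set ℕ)) : Prop :=
  IsEFilter U ∧
  (∀ U' : Set (Set ℕ), IsEFilter U' → U ⊆ U' → U' = U) ∧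
  (∀ A ∈ U, ∀ a : Finset ℕ, ↑a ⊆ A →
    (∀ B ∈ U ∩ ENbhdN (depth A a) A, (ENbhd a B).Nonempty) ∧
    (∀ B ∈ U, B ⊆ A → (ENbhd a B).Nonempty →
      ∃ A' ∈ U ∩ ENbhdN (depth A a) A,
        (ENbhd a A').Nonempty ∧ ENbhd a A' ⊆ ENbhd a B))

/-- `U` is a selective ultrafilter. -/
def SelectiveUltrafilter (U : Set (Set ℕ)) : Prop :=
  IsEUltrafilter U ∧
  ∀ A ∈ U, ∀ Afam : Finset ℕ → Set ℕ,
    (∀ a : Finset ℕ, ↑a ⊆ A → Afam a ∈ U ∧ Afam a ⊆ A ∧ (ENbhd a (Afam a)).Nonempty) →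
    FilteredFamily A Afam →
    ∃ B ∈ U, B ⊆ A ∧ Diagonalizes B Afam

/-- The conditions of the Mathias poset `M_U` : pairs `(a, A)` with `A ∈ U`, `[a,A] ≠ ∅`. -/
def MathiasCond (U : Set (Set ℕ)) : Set (Finset ℕ × Set ℕ) :=
  {p | p.2 ∈ U ∧ (ENbhd p.1 p.2).Nonempty}

/-- `D` is a dense open subset of the Mathias poset `M_U`
(ordered by `(a,A) ≤ (b,B) ↔ [a,A] ⊆ [b,B]`). -/
def MathiasDenseOpen (U : Set (Set ℕ)) (D : Set (Finset ℕ × Set ℕ)) : Prop :=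
  D ⊆ MathiasCond U ∧
  (∀ p ∈ MathiasCond U, ∃ q ∈ D, ENbhd q.1 q.2 ⊆ ENbhd p.1 p.2) ∧
  (∀ p ∈ MathiasCond U, ∀ q ∈ D, ENbhd p.1 p.2 ⊆ ENbhd q.1 q.2 → p ∈ D)

/-- `A` captures `(a, D)`. -/
def Captures (U : Set (Set ℕ)) (D : Set (Finset ℕ × Set ℕ))
    (a : Finset ℕ) (A : Set ℕ) : Prop :=
  A ∈ U ∧ (ENbhd a A).Nonempty ∧
  ∀ B ∈ ENbhd a A, ∃ m : ℕ, m > a.card ∧ (ellR m B, A) ∈ D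


/-!
Let `Φ` be the closure of `X` in the Ellentuck topology. An `H`-Ramsey set `Y ⊆ Φ \ X` has
empty Ellentuck interior, so no `[a, B]` with `B ∈ H` lies inside `Y`, and `Y` is `H`-Ramsey null.
That `Φ` itself is `H`-Ramsey is the relative Ellentuck theorem: Ellentuck-open sets `O` are
`H`-Ramsey. Its proof is combinatorial forcing: `Y` accepts `s` if `[s, s ∪ Y/s] ⊆ O` and
rejects `s` if no subset of `Y` accepts it. Semiselectivity yields `C ∈ H` deciding every
extension of `a`; if `C` rejects `a`, the coideal pigeonhole and a second diagonalization
propagate rejection to all extensions of `a`, and openness of `O` then makes `[a, a ∪ C/a]`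
disjoint from `O`.
-/

/-- `above s Y` is `Y/s`, the part of `Y` beyond every element of `s`. -/
def above (s : Finset ℕ) (Y : Set ℕ) : Set ℕ :=
  {x ∈ Y | ∀ y ∈ s, y < x}

section above

variable {s b : Finset ℕ} {Y Z A C : Set ℕ}

lemma above_subset : above s Y ⊆ Y := fun _ hx => hx.1

lemma above_mono (h : Y ⊆ Z) : above s Y ⊆ above s Z := fun _ hx => ⟨h hx.1, hx.2⟩

lemma above_anti (h : b ⊆ s) : above s Y ⊆ above b Y :=
  fun _ hx => ⟨hx.1, fun y hy => hx.2 y (h hy)⟩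

lemma infinite_above (hY : Y.Infinite) (s : Finset ℕ) : (above s Y).Infinite :=
  (hY.sdiff (finite_Iic (s.sup id))).mono fun _ hx =>
    ⟨hx.1, fun _ hy => (Finset.le_sup (f := id) hy).trans_lt (not_le.mp hx.2)⟩

lemma union_above_mem_ENbhd (hZ : Z.Infinite) (hs : ↑s ⊆ A) (hZA : Z ⊆ A) :
    ↑s ∪ above s Z ∈ ENbhd s A := by
  refine ⟨(infinite_above hZ s).mono subset_union_right, ⟨subset_union_left, ?_⟩,
    union_subset hs (above_subset.trans hZA)⟩
  rintro x (hx | hx) hxs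
  · exact absurd hx hxs
  · exact hx.2

lemma mem_ENbhd_union_above :
    C ∈ ENbhd s (↑s ∪ above s Y) ↔ C.Infinite ∧ ↑s ⊆ C ∧ C \ ↑s ⊆ above s Y := by
  constructor
  · rintro ⟨hC, ⟨hsC, -⟩, hCY⟩
    exact ⟨hC, hsC, fun x hx => (hCY hx.1).resolve_left hx.2⟩
  · rintro ⟨hC, hsC, hCY⟩
    refine ⟨hC, ⟨hsC, fun x hx hxs => (hCY ⟨hx, hxs⟩).2⟩, fun x hx => ?_⟩
    by_cases hxs : x ∈ (s : Set ℕ)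
    · exact Or.inl hxs
    · exact Or.inr (hCY ⟨hx, hxs⟩)

lemma above_subset_of_ENbhd_subset (hC : C.Infinite) (hb : ↑b ⊆ C)
    (h : ENbhd b C ⊆ ENbhd b Y) : above b C ⊆ Y := by
  intro x hx
  have hE := union_above_mem_ENbhd (hC.sdiff (finite_Iio x)) hb sdiff_subset
  exact (h hE).2.2 (Or.inr ⟨⟨hx.1, lt_irrefl x⟩, hx.2⟩)

end above

section coideal

variable {H : Set (Set ℕ)} {Y : Set ℕ}

lemma IsCoideal.exists_subset_forall_or_forall_not (hH : IsCoideal H) (hY : Y ∈ H)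
    (p : ℕ → Prop) : ∃ B ∈ H, B ⊆ Y ∧ ((∀ x ∈ B, p x) ∨ ∀ x ∈ B, ¬ p x) := by
  obtain ⟨B, ⟨hBH, -, -, hBY⟩, hB⟩ :=
    hH.2.2.2 Y hY ∅ (by simp) {t | ∀ x, t = insert x ∅ → p x}
  refine ⟨B, hBH, hBY, ?_⟩
  rcases hB with hB | hB
  · exact Or.inl fun x hx => hB ⟨x, hx, by simp, rfl⟩ x rfl
  · refine Or.inr fun x hx hpx => eq_empty_iff_forall_notMem.mp hB (insert x ∅)
      ⟨⟨x, hx, by simp, rfl⟩, fun x' hx' => ?_⟩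
    obtain rfl : x = x' := by simpa using hx'
    exact hpx

lemma IsCoideal.above_mem (hH : IsCoideal H) (hY : Y ∈ H) (s : Finset ℕ) : above s Y ∈ H := by
  obtain ⟨B, hBH, hBY, hB | hB⟩ :=
    hH.exists_subset_forall_or_forall_not hY (fun x => ∀ y ∈ s, y < x)
  · exact hH.2.1 B hBH _ (infinite_above (hH.1 Y hY) s) fun x hx => ⟨hBY hx, hB x hx⟩
  · obtain ⟨x, hx, hxs⟩ := (infinite_above (hH.1 B hBH) s).nonempty
    exact absurd hxs (hB x hx)

lemma IsCoideal.union_above_mem (hH : IsCoideal H) (hY : Y ∈ H) (s : Finset ℕ) :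
    ↑s ∪ above s Y ∈ H :=
  hH.2.1 _ (hH.above_mem hY s) _ ((infinite_above (hH.1 Y hY) s).mono subset_union_right)
    subset_union_right

end coideal

theorem Semiselective.exists_forall_above_of_dense {H : Set (Set ℕ)} (hH : Semiselective H)
    {A : Set ℕ} (hA : A ∈ H) (P : Finset ℕ → Set ℕ → Prop)
    (hP : ∀ b Y Z, Y ⊆ Z → P b Z → P b Y) (hdense : ∀ b, ∀ Y ∈ H, Y ⊆ A → ∃ Z ⊆ Y, P b Z) :
    ∃ C ∈ H, C ⊆ A ∧ ∀ b : Finset ℕ, ↑b ⊆ C → P b (above b C) := by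
  have hD : ∀ b : Finset ℕ, ↑b ⊆ A → DenseOpenIn {Y | P b Y} (H ∩ ENbhdN (depth A b) A) := by
    refine fun b _ => ⟨fun Y ⟨hYH, _, _, hYA⟩ => ?_, fun _ _ _ hZ hYZ => hP b _ _ hYZ hZ⟩
    obtain ⟨Z, hZY, hZ⟩ := hdense b Y hYH hYA
    exact ⟨Z, hZ, hZY⟩
  obtain ⟨C, hCH, hCA, Afam, hAfam, hdiag⟩ :=
    hH.2 A hA (fun b => {Y | P b Y}) hD A hA subset_rfl
  exact ⟨C, hCH, hCA, fun b hb => hP b _ _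
    (above_subset_of_ENbhd_subset (hH.1.1 C hCH) hb (hdiag b hb)) (hAfam b (hb.trans hCA))⟩

def AcceptsIn (O : Set (Set ℕ)) (s : Finset ℕ) (Y : Set ℕ) : Prop :=
  ENbhd s (↑s ∪ above s Y) ⊆ O

def RejectsIn (O : Set (Set ℕ)) (s : Finset ℕ) (Y : Set ℕ) : Prop :=
  ∀ Z ⊆ Y, ¬ AcceptsIn O s Z

def IsEllentuckOpen (O : Set (Set ℕ)) : Prop :=
  ∀ D ∈ O, ∃ (b : Finset ℕ) (B : Set ℕ), D ∈ ENbhd b B ∧ ENbhd b B ⊆ O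

section forcing

variable {O : Set (Set ℕ)} {s b : Finset ℕ} {Y Z : Set ℕ}

lemma AcceptsIn.of_above_subset (hZ : AcceptsIn O s Z) (h : above s Y ⊆ Z) :
    AcceptsIn O s Y := by
  intro C hC
  obtain ⟨hCinf, hsC, hCY⟩ := mem_ENbhd_union_above.mp hC
  exact hZ (mem_ENbhd_union_above.mpr
    ⟨hCinf, hsC, fun x hx => ⟨h (hCY hx), (hCY hx).2⟩⟩)

lemma AcceptsIn.mono (hZ : AcceptsIn O s Z) (h : Y ⊆ Z) : AcceptsIn O s Y :=
  hZ.of_above_subset (above_subset.trans h)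

lemma RejectsIn.mono (hZ : RejectsIn O s Z) (h : Y ⊆ Z) : RejectsIn O s Y :=
  fun W hW => hZ W (hW.trans h)

lemma RejectsIn.of_above (hb : b ⊆ s) (h : RejectsIn O s (above b Y)) : RejectsIn O s Y :=
  fun Z hZY hZ => h (above s Z) ((above_anti hb).trans (above_mono hZY))
    (hZ.of_above_subset (above_subset.trans above_subset))

/-- An element of `[s, s ∪ Y/s]` lies in `[s ∪ {x}, …]` for its least element `x` outside `s`. -/
lemma acceptsIn_of_forall_insert (h : ∀ x ∈ above s Y, AcceptsIn O (insert x s) Y) :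
    AcceptsIn O s Y := by
  intro C hC
  obtain ⟨hCinf, hsC, hCY⟩ := mem_ENbhd_union_above.mp hC
  obtain ⟨x, hx, hxmin⟩ : ∃ x ∈ C \ ↑s, ∀ z ∈ C \ ↑s, x ≤ z :=
    ⟨_, Nat.sInf_mem (hCinf.sdiff s.finite_toSet).nonempty, fun z hz => Nat.sInf_le hz⟩
  refine h x (hCY hx) (mem_ENbhd_union_above.mpr ⟨hCinf, ?_, fun z hz => ?_⟩)
  · rw [Finset.coe_insert]
    exact insert_subset hx.1 hsC
  · have hzs : z ∉ (s : Set ℕ) := fun h => hz.2 (by simp [h])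
    have hxz : x < z := (hxmin z ⟨hz.1, hzs⟩).lt_of_ne fun h => hz.2 (by simp [h])
    refine ⟨(hCY ⟨hz.1, hzs⟩).1, fun y hy => ?_⟩
    rcases Finset.mem_insert.mp hy with rfl | hy
    · exact hxz
    · exact (hCY ⟨hz.1, hzs⟩).2 y hy

lemma IsEllentuckOpen.exists_acceptsIn (hO : IsEllentuckOpen O) {D : Set ℕ} (hD : D ∈ O) :
    ∃ b : Finset ℕ, ↑b ⊆ D ∧ ∀ s : Finset ℕ, b ⊆ s → ↑s ⊆ D → AcceptsIn O s D := by
  obtain ⟨b, B, ⟨-, ⟨hbD, hDb⟩, hDB⟩, hbB⟩ := hO D hD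
  refine ⟨b, hbD, fun s hbs hsD C hC => hbB ?_⟩
  obtain ⟨hCinf, hsC, hCD⟩ := mem_ENbhd_union_above.mp hC
  refine ⟨hCinf, ⟨(Finset.coe_subset.mpr hbs).trans hsC, fun z hzC hzb y hy => ?_⟩,
    fun z hz => hDB ?_⟩
  · by_cases hzs : z ∈ (s : Set ℕ)
    · exact hDb z (hsD hzs) hzb y hy
    · exact (hCD ⟨hzC, hzs⟩).2 y (hbs hy)
  · by_cases hzs : z ∈ (s : Set ℕ)
    · exact hsD hzs
    · exact (hCD ⟨hz, hzs⟩).1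

lemma IsEllentuckOpen.inter_eq_empty (hO : IsEllentuckOpen O) {a : Finset ℕ}
    (hY : ∀ t : Finset ℕ, ↑t ⊆ above a Y → RejectsIn O (a ∪ t) Y) :
    ENbhd a (↑a ∪ above a Y) ∩ O = ∅ := by
  refine eq_empty_iff_forall_notMem.mpr fun D ⟨hDa, hDO⟩ => ?_
  obtain ⟨-, haD, hDY⟩ := mem_ENbhd_union_above.mp hDa
  obtain ⟨b, hbD, hb⟩ := hO.exists_acceptsIn hDO
  have hacc : AcceptsIn O (a ∪ b) D :=
    hb _ Finset.subset_union_right (by simpa using union_subset haD hbD)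
  have hrej : RejectsIn O (a ∪ b) Y := by
    have := hY (b \ a) fun x hx => by
      rw [Finset.coe_sdiff] at hx
      exact hDY ⟨hbD hx.1, hx.2⟩
    rwa [Finset.union_sdiff_self_eq_union] at this
  refine hrej (above (a ∪ b) D) (fun x hx => (hDY ⟨hx.1, fun hxa => ?_⟩).1)
    (hacc.of_above_subset (above_subset.trans above_subset))
  exact lt_irrefl x (hx.2 x (Finset.mem_union_left b hxa))

end forcing

section semiselective

variable {H O : Set (Set ℕ)}

lemma Semiselective.exists_decides (hH : Semiselective H) (O : Set (Set ℕ)) (a : Finset ℕ)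
    {A : Set ℕ} (hA : A ∈ H) : ∃ C ∈ H, C ⊆ A ∧
      ∀ t : Finset ℕ, ↑t ⊆ C → AcceptsIn O (a ∪ t) C ∨ RejectsIn O (a ∪ t) C := by
  have hdense : ∀ (t : Finset ℕ) (Y : Set ℕ),
      ∃ Z ⊆ Y, AcceptsIn O (a ∪ t) Z ∨ RejectsIn O (a ∪ t) Z := by
    intro t Y
    by_cases h : RejectsIn O (a ∪ t) Y
    · exact ⟨Y, subset_rfl, Or.inr h⟩
    · simp only [RejectsIn, not_forall, not_not] at h
      obtain ⟨Z, hZY, hZ⟩ := h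
      exact ⟨Z, hZY, Or.inl hZ⟩
  obtain ⟨C, hCH, hCA, hC⟩ := hH.exists_forall_above_of_dense hA
    (fun t Y => AcceptsIn O (a ∪ t) Y ∨ RejectsIn O (a ∪ t) Y)
    (fun _ _ _ hYZ => Or.imp (·.mono hYZ) (·.mono hYZ)) fun t Y _ _ => hdense t Y
  exact ⟨C, hCH, hCA, fun t ht => (hC t ht).imp
    (·.of_above_subset (above_anti Finset.subset_union_right))
    (·.of_above Finset.subset_union_right)⟩

lemma Semiselective.exists_rejectsIn_extensions (hH : Semiselective H) {a : Finset ℕ}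
    {C : Set ℕ} (hC : C ∈ H)
    (hdec : ∀ t : Finset ℕ, ↑t ⊆ C → AcceptsIn O (a ∪ t) C ∨ RejectsIn O (a ∪ t) C)
    (hrej : RejectsIn O a C) :
    ∃ C' ∈ H, C' ⊆ C ∧ ∀ t : Finset ℕ, ↑t ⊆ above a C' → RejectsIn O (a ∪ t) C' := by
  have hdense : ∀ (t : Finset ℕ), ∀ Y ∈ H, Y ⊆ C → ∃ Z ⊆ Y, ↑t ⊆ C →
      RejectsIn O (a ∪ t) C → ∀ x ∈ above (a ∪ t) Z, RejectsIn O (insert x (a ∪ t)) C := by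
    intro t Y hYH hYC
    obtain ⟨B, -, hBY, hB | hB⟩ := hH.1.exists_subset_forall_or_forall_not hYH
      fun x => RejectsIn O (insert x (a ∪ t)) C
    · exact ⟨B, hBY, fun _ _ x hx => hB x hx.1⟩
    · refine ⟨Y, subset_rfl, fun htC hr => absurd ?_ (hr B (hBY.trans hYC))⟩
      refine acceptsIn_of_forall_insert fun x hx => ?_
      have hdecx := hdec (insert x t) (by
        rw [Finset.coe_insert]
        exact insert_subset (hYC (hBY hx.1)) htC)
      rw [Finset.union_insert] at hdecx
      exact (hdecx.resolve_right (hB x hx.1)).mono (hBY.trans hYC)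
  obtain ⟨C', hC'H, hC'C, hC'⟩ := hH.exists_forall_above_of_dense hC
    (fun t Y => ↑t ⊆ C → RejectsIn O (a ∪ t) C →
      ∀ x ∈ above (a ∪ t) Y, RejectsIn O (insert x (a ∪ t)) C)
    (fun _ _ _ hYZ h ht hr x hx => h ht hr x (above_mono hYZ hx)) hdense
  refine ⟨C', hC'H, hC'C, fun t ht => RejectsIn.mono ?_ hC'C⟩
  induction t using Finset.induction_on_max with
  | empty => simpa using hrej
  | insert x t hxt ih =>
    have htC' : ↑t ⊆ above a C' :=
      (Finset.coe_subset.mpr (Finset.subset_insert x t)).trans ht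
    have hx : x ∈ above a C' := ht (by simp)
    rw [Finset.union_insert]
    exact hC' t (htC'.trans above_subset) (htC'.trans (above_subset.trans hC'C)) (ih htC') x
      ⟨⟨hx.1, hxt⟩, fun y hy => (Finset.mem_union.mp hy).elim (hx.2 y) (hxt y)⟩

theorem IsEllentuckOpen.hRamsey (hH : Semiselective H) (hO : IsEllentuckOpen O) :
    HRamsey H O := by
  rintro a A hA ⟨D, -, ⟨haD, -⟩, hDA⟩
  have hmem : ∀ C ∈ H, C ⊆ A → ↑a ∪ above a C ∈ ENbhd a A ∩ H := fun C hCH hCA =>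
    ⟨union_above_mem_ENbhd (hH.1.1 C hCH) (haD.trans hDA) hCA, hH.1.union_above_mem hCH a⟩
  obtain ⟨C, hCH, hCA, hdec⟩ := hH.exists_decides O a hA
  rcases hdec ∅ (by simp) with hacc | hrej
  · rw [Finset.union_empty] at hacc
    exact ⟨_, hmem C hCH hCA, Or.inl hacc⟩
  · obtain ⟨C', hC'H, hC'C, hC'⟩ :=
      hH.exists_rejectsIn_extensions hCH hdec (by simpa using hrej)
    exact ⟨_, hmem C' hC'H (hC'C.trans hCA), Or.inr (hO.inter_eq_empty hC')⟩

end semiselective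

def ellentuckInterior (S : Set (Set ℕ)) : Set (Set ℕ) :=
  {D | ∃ (b : Finset ℕ) (B : Set ℕ), D ∈ ENbhd b B ∧ ENbhd b B ⊆ S}

section interior

variable {H S T : Set (Set ℕ)}

lemma ellentuckInterior_subset : ellentuckInterior S ⊆ S := fun _ ⟨_, _, hD, hS⟩ => hS hD

lemma ellentuckInterior_mono (h : S ⊆ T) : ellentuckInterior S ⊆ ellentuckInterior T :=
  fun _ ⟨b, B, hD, hS⟩ => ⟨b, B, hD, hS.trans h⟩

lemma isEllentuckOpen_ellentuckInterior : IsEllentuckOpen (ellentuckInterior S) :=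
  fun _ ⟨b, B, hD, hS⟩ => ⟨b, B, hD, fun _ hE => ⟨b, B, hE, hS⟩⟩

lemma HRamsey.compl (h : HRamsey H S) : HRamsey H Sᶜ := by
  intro a A hA hne
  obtain ⟨B, hB, hBS | hBS⟩ := h a A hA hne
  · exact ⟨B, hB, Or.inr (sdiff_eq_empty.mpr hBS)⟩
  · exact ⟨B, hB, Or.inl
      (subset_compl_iff_disjoint_right.mpr (disjoint_iff_inter_eq_empty.mpr hBS))⟩

lemma HRamsey.hRamseyNull (h : HRamsey H S) (hS : ellentuckInterior S = ∅) :
    HRamseyNull H S := by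
  intro a A hA hne
  obtain ⟨B, ⟨⟨hBinf, haB, hBA⟩, hBH⟩, hBS | hBS⟩ := h a A hA hne
  · exact (eq_empty_iff_forall_notMem.mp hS B ⟨a, B, ⟨hBinf, haB, subset_rfl⟩, hBS⟩).elim
  · exact ⟨B, ⟨⟨hBinf, haB, hBA⟩, hBH⟩, hBS⟩

end interior

/-- Marczewski pair property: the `H`-Ramsey sets together with the `H`-Ramsey null
sets form a Marczewski pair, for a semiselective coideal `H`. -/
theorem marczewski_pair (H : Set (Set ℕ)) (hH : Semiselective H)
    (X : Set (Set ℕ)) :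
    ∃ Φ : Set (Set ℕ), HRamsey H Φ ∧ X ⊆ Φ ∧
      ∀ Y : Set (Set ℕ), Y ⊆ Φ \ X → HRamsey H Y → HRamseyNull H Y := by
  refine ⟨(ellentuckInterior Xᶜ)ᶜ, (isEllentuckOpen_ellentuckInterior.hRamsey hH).compl,
    subset_compl_comm.mp ellentuckInterior_subset, fun Y hY hYR => hYR.hRamseyNull ?_⟩
  refine eq_empty_of_forall_notMem fun D hD => ?_
  have hDX := ellentuckInterior_mono (fun E hE => (hY hE).2) hD
  exact (hY (ellentuckInterior_subset hD)).1 hDX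
end

section
/- Every ultrafilter satisfies the local pigeonhole principle (A4 mod U), and is therefore a coideal: Let U ⊆ ℕ^[∞] be an ultrafilter. Then for every A ∈ U, every finite a ⊆ A, and every set O of finite subsets of ℕ of size |a|+1, there exists B ∈ U ∩ [depth_A(a),A] such that {a ∪ {x} : x ∈ B, x greater than every element of a} is either contained in O or disjoint from O. -/
open Set

/-!
Let `X` be the set of `x` with `a ∪ {x} ∈ O`. Call `Z ⊆ ℕ` positive if it meets every member of
`U` in an infinite set. Since any two members of `U` have a common lower bound in `U`, either
`X` or its complement is positive. For a positive `Z`, the sets containing a tail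
`C ∩ Z ∩ (n, ∞)` of some `C ∈ U` form a filter extending `U`, so by maximality they lie in `U`.
In particular `B = r_d(A) ∪ (A ∩ Z ∩ (max r_d(A), ∞))`, with `d = depth_A(a)`, is in
`U ∩ [d, A]`; as the largest element of `r_d(A)` lies in `a`, every `x ∈ B` above `a` is in `Z`.
-/

lemma isInitSeg_empty (B : Set ℕ) : IsInitSeg ∅ B :=
  ⟨by simp, fun _ _ _ _ hy => absurd hy (Finset.notMem_empty _)⟩

lemma union_mem_ENbhd {g : Finset ℕ} {Y B : Set ℕ} (hY : Y.Infinite)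
    (hlt : ∀ x ∈ Y, ∀ y ∈ g, y < x) (hgB : ↑g ⊆ B) (hYB : Y ⊆ B) :
    ↑g ∪ Y ∈ ENbhd g B := by
  refine ⟨hY.mono subset_union_right, ⟨subset_union_left, ?_⟩, union_subset hgB hYB⟩
  rintro x (hx | hx) hxg y hy
  · exact absurd hx hxg
  · exact hlt x hx y hy

lemma Set.Infinite.inter_Ioi {s : Set ℕ} (hs : s.Infinite) (n : ℕ) : (s ∩ Ioi n).Infinite :=
  (hs.sdiff (finite_Iic n)).mono fun _ hx => ⟨hx.1, not_le.mp (mem_Iic.not.mp hx.2)⟩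

lemma lt_of_mem_Ioi_sup {g : Finset ℕ} {n x : ℕ} (hn : g.sup id ≤ n) (hx : x ∈ Ioi n) :
    ∀ y ∈ g, y < x :=
  fun _ hy => (Finset.le_sup (f := id) hy).trans_lt (hn.trans_lt hx)

section Approximation

variable {A : Set ℕ}

lemma coe_ellR_subset (hA : A.Infinite) (n : ℕ) : ↑(ellR n A) ⊆ A := by
  intro x hx
  obtain ⟨i, -, rfl⟩ := Finset.mem_image.mp hx
  exact Nat.nth_mem_of_infinite hA i

open Classical in
lemma subset_ellR_depth {a : Finset ℕ} (ha : ↑a ⊆ A) : a ⊆ ellR (depth A a) A := by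
  refine Nat.sInf_mem (s := {n | a ⊆ ellR n A}) ⟨a.sup (Nat.count (· ∈ A)) + 1, ?_⟩
  intro x hx
  exact Finset.mem_image.mpr ⟨Nat.count (· ∈ A) x,
    Finset.mem_range.mpr (Nat.lt_succ_of_le (Finset.le_sup hx)), Nat.nth_count (ha hx)⟩

lemma exists_le_of_mem_ellR_depth (hA : A.Infinite) {a : Finset ℕ} (ha : ↑a ⊆ A) {x : ℕ}
    (hx : x ∈ ellR (depth A a) A) : ∃ y ∈ a, x ≤ y := by
  set d := depth A a
  obtain ⟨i, hi, rfl⟩ := Finset.mem_image.mp hx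
  have hi : i < d := Finset.mem_range.mp hi
  have hnot : ¬ a ⊆ ellR (d - 1) A := Nat.notMem_of_lt_sInf (s := {n | a ⊆ ellR n A}) (by
    change d - 1 < d; omega)
  obtain ⟨z, hza, hz⟩ := Finset.not_subset.mp hnot
  obtain ⟨j, hj, rfl⟩ := Finset.mem_image.mp (subset_ellR_depth ha hza)
  have hj : j = d - 1 := by
    by_contra hne
    exact hz (Finset.mem_image.mpr ⟨j, Finset.mem_range.mpr (by
      have := Finset.mem_range.mp hj; omega), rfl⟩)
  exact ⟨_, hza, Nat.nth_monotone hA (by omega)⟩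

end Approximation

def IsPositive (U : Set (Set ℕ)) (Z : Set ℕ) : Prop :=
  ∀ D ∈ U, (D ∩ Z).Infinite

lemma IsEFilter.exists_subset_subset {U : Set (Set ℕ)} (hU : IsEFilter U) {C₁ C₂ : Set ℕ}
    (h₁ : C₁ ∈ U) (h₂ : C₂ ∈ U) : ∃ C ∈ U, C ⊆ C₁ ∧ C ⊆ C₂ := by
  obtain ⟨C, hC, hC₁, hC₂⟩ := hU.2.2 C₁ h₁ C₂ h₂ ∅
    ⟨C₁, hU.1 C₁ h₁, isInitSeg_empty C₁, subset_rfl⟩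
    ⟨C₂, hU.1 C₂ h₂, isInitSeg_empty C₂, subset_rfl⟩
  exact ⟨C, hC, hC₁.2.2, hC₂.2.2⟩

lemma IsEFilter.isPositive_or_isPositive_compl {U : Set (Set ℕ)} (hU : IsEFilter U)
    (Z : Set ℕ) : IsPositive U Z ∨ IsPositive U Zᶜ := by
  refine or_iff_not_imp_left.mpr fun hZ D' hD' => ?_
  simp only [IsPositive, not_forall, Set.not_infinite] at hZ
  obtain ⟨D, hD, hDZ⟩ := hZ
  obtain ⟨E, hE, hED, hED'⟩ := hU.exists_subset_subset hD hD'
  exact ((hU.1 E hE).sdiff hDZ).mono fun x hx => ⟨hED' hx.1, fun hxZ => hx.2 ⟨hED hx.1, hxZ⟩⟩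

def tailFilter (U : Set (Set ℕ)) (Z : Set ℕ) : Set (Set ℕ) :=
  {B | B.Infinite ∧ ∃ C ∈ U, ∃ n : ℕ, C ∩ Z ∩ Ioi n ⊆ B}

lemma IsEFilter.isEFilter_tailFilter {U : Set (Set ℕ)} (hU : IsEFilter U) {Z : Set ℕ}
    (hZ : IsPositive U Z) : IsEFilter (tailFilter U Z) := by
  refine ⟨fun B hB => hB.1, fun B ⟨_, C, hC, n, hn⟩ B' hB' hBB' => ⟨hB', C, hC, n, hn.trans hBB'⟩,
    ?_⟩
  rintro B₁ ⟨-, C₁, hC₁, n₁, hn₁⟩ B₂ ⟨-, C₂, hC₂, n₂, hn₂⟩ g ⟨W₁, -, ⟨hgW₁, -⟩, hW₁⟩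
    ⟨W₂, -, ⟨hgW₂, -⟩, hW₂⟩
  obtain ⟨C, hC, hCC₁, hCC₂⟩ := hU.exists_subset_subset hC₁ hC₂
  set N := max (max n₁ n₂) (g.sup id)
  have hY : (C ∩ Z ∩ Ioi N).Infinite := (hZ C hC).inter_Ioi N
  have hlt : ∀ x ∈ C ∩ Z ∩ Ioi N, ∀ y ∈ g, y < x :=
    fun x hx => lt_of_mem_Ioi_sup (le_max_right _ _) hx.2
  have htail {C' : Set ℕ} {n : ℕ} (hCC' : C ⊆ C') (hn : n ≤ N) :
      C ∩ Z ∩ Ioi N ⊆ C' ∩ Z ∩ Ioi n :=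
    fun x hx => ⟨⟨hCC' hx.1.1, hx.1.2⟩, hn.trans_lt hx.2⟩
  refine ⟨↑g ∪ (C ∩ Z ∩ Ioi N), ⟨hY.mono subset_union_right, C, hC, N, subset_union_right⟩,
    union_mem_ENbhd hY hlt (hgW₁.trans hW₁) ((htail hCC₁ ?_).trans hn₁),
    union_mem_ENbhd hY hlt (hgW₂.trans hW₂) ((htail hCC₂ ?_).trans hn₂)⟩ <;> omega

lemma IsEUltrafilter.mem_of_inter_Ioi_subset {U : Set (Set ℕ)} (hU : IsEUltrafilter U)
    {Z : Set ℕ} (hZ : IsPositive U Z) {C B : Set ℕ} (hC : C ∈ U) (n : ℕ)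
    (hB : B.Infinite) (hCB : C ∩ Z ∩ Ioi n ⊆ B) : B ∈ U := by
  have hU' : tailFilter U Z = U := hU.2.1 _ (hU.1.isEFilter_tailFilter hZ)
    fun C hC => ⟨hU.1.1 C hC, C, hC, 0, fun _ hx => hx.1.1⟩
  exact hU' ▸ ⟨hB, C, hC, n, hCB⟩

lemma IsEUltrafilter.exists_mem_ENbhdN_depth {U : Set (Set ℕ)} (hU : IsEUltrafilter U)
    {A : Set ℕ} (hA : A ∈ U) {a : Finset ℕ} (ha : ↑a ⊆ A) {Z : Set ℕ}
    (hZ : IsPositive U Z) :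
    ∃ B ∈ U ∩ ENbhdN (depth A a) A, ∀ x ∈ B, (∀ y ∈ a, y < x) → x ∈ Z := by
  have hAinf : A.Infinite := hU.1.1 A hA
  set r := ellR (depth A a) A
  set M := r.sup id
  have hY : (A ∩ Z ∩ Ioi M).Infinite := (hZ A hA).inter_Ioi M
  refine ⟨↑r ∪ (A ∩ Z ∩ Ioi M),
    ⟨hU.mem_of_inter_Ioi_subset hZ hA M (hY.mono subset_union_right) subset_union_right,
      union_mem_ENbhd hY (fun x hx => lt_of_mem_Ioi_sup le_rfl hx.2) (coe_ellR_subset hAinf _)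
        fun _ hx => hx.1.1⟩, ?_⟩
  rintro x (hx | hx) hlt
  · obtain ⟨y, hy, hxy⟩ := exists_le_of_mem_ellR_depth hAinf ha hx
    exact absurd (hlt y hy) hxy.not_gt
  · exact hx.1.2

theorem ultrafilter_A4_general (U : Set (Set ℕ)) (hU : IsEUltrafilter U)
    (A : Set ℕ) (hA : A ∈ U) (a : Finset ℕ) (ha : ↑a ⊆ A)
    (O : Set (Finset ℕ)) :
    ∃ B ∈ U ∩ ENbhdN (depth A a) A,
      oneStepExt a B ⊆ O ∨ oneStepExt a B ∩ O = ∅ := by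
  rcases hU.1.isPositive_or_isPositive_compl {x | insert x a ∈ O} with hX | hX
  · obtain ⟨B, hB, hBX⟩ := hU.exists_mem_ENbhdN_depth hA ha hX
    refine ⟨B, hB, Or.inl ?_⟩
    rintro b ⟨x, hxB, hlt, rfl⟩
    exact hBX x hxB hlt
  · obtain ⟨B, hB, hBX⟩ := hU.exists_mem_ENbhdN_depth hA ha hX
    refine ⟨B, hB, Or.inr (eq_empty_iff_forall_notMem.mpr ?_)⟩
    rintro b ⟨⟨x, hxB, hlt, rfl⟩, hbO⟩
    exact hBX x hxB hlt hbO

/-- Every ultrafilter satisfies the local pigeonhole principle (A4 mod U). -/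
theorem ultrafilter_A4 (U : Set (Set ℕ)) (hU : IsEUltrafilter U)
    (A : Set ℕ) (hA : A ∈ U) (a : Finset ℕ) (ha : ↑a ⊆ A)
    (O : Set (Finset ℕ)) (hO : ∀ b ∈ O, b.card = a.card + 1) :
    ∃ B ∈ U ∩ ENbhdN (depth A a) A,
      oneStepExt a B ⊆ O ∨ oneStepExt a B ∩ O = ∅ :=
  ultrafilter_A4_general U hU A hA a ha O
end
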